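/- arXiv:2009.02774 — 5 statements merged into one kernel-verified Lean document; each statement's English description precedes it below -/
import Mathlib

section
/- Let K be an algebraically closed field and V', V vector spaces over K with 0 < dim V' = n' < dim V = n. If W ⊆ Hom(V', V) is a linear subspace of dimension n such that every nonzero f ∈ W has rank n', then n' = 1. -/
open Module

/-- Over an algebraically closed field, if a subspace `W ⊆ Hom(V', V)` of dimension
`n = dim V` consists (apart from `0`) of maps of full rank `n' = dim V'` with
`0 < n' < n`, then `n' = 1`. -/
theorem rank_one_of_constant_rank_subspace
    {K V' V : Type*} [Field K] [IsAlgClosed K]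
    [AddCommGroup V'] [Module K V'] [FiniteDimensional K V']
    [AddCommGroup V] [Module K V] [FiniteDimensional K V]
    (h0 : 0 < finrank K V') (hlt : finrank K V' < finrank K V)
    (W : Submodule K (V' →ₗ[K] V))
    (hdim : finrank K W = finrank K V)
    (hrank : ∀ f ∈ W, f ≠ 0 → finrank K (LinearMap.range f) = finrank K V') :
    finrank K V' = 1 := by
  by_contra hne
  have h2 : 2 ≤ finrank K V' := by omega
  haveI : Nontrivial V' := Module.nontrivial_of_finrank_pos (R := K) h0
  haveI : Nontrivial V := Module.nontrivial_of_finrank_pos (R := K) (show 0 < finrank K V by omega)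
  -- every nonzero element of W is injective
  have hinj : ∀ f : W, (f : V' →ₗ[K] V) ≠ 0 → Function.Injective (f : V' →ₗ[K] V) := by
    intro f hf
    have h := LinearMap.finrank_range_add_finrank_ker (f : V' →ₗ[K] V)
    have hr := hrank f f.2 hf
    have hk0 : finrank K (LinearMap.ker (f : V' →ₗ[K] V)) = 0 := by omega
    have hk : LinearMap.ker (f : V' →ₗ[K] V) = ⊥ := Submodule.finrank_eq_zero.mp hk0
    exact LinearMap.ker_eq_bot.mp hk
  -- evaluation at v
  let ev : V' → (W →ₗ[K] V) := fun v => (LinearMap.applyₗ v).comp W.subtype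
  have hev : ∀ (v : V') (f : W), ev v f = (f : V' →ₗ[K] V) v := fun _ _ => rfl
  have hev_inj : ∀ v : V', v ≠ 0 → Function.Injective (ev v) := by
    intro v hv
    rw [← LinearMap.ker_eq_bot, Submodule.eq_bot_iff]
    intro f hf
    by_contra hf0
    have hfne : (f : V' →ₗ[K] V) ≠ 0 := by
      intro h; exact hf0 (Subtype.ext h)
    have hinjf := hinj f hfne
    have hfv : (f : V' →ₗ[K] V) v = (f : V' →ₗ[K] V) 0 := by
      rw [map_zero]; exact hf
    exact hv (hinjf hfv)
  have hev_bij : ∀ v : V', v ≠ 0 → Function.Bijective (ev v) := fun v hv =>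
    ⟨hev_inj v hv,
     (LinearMap.injective_iff_surjective_of_finrank_eq_finrank hdim).mp (hev_inj v hv)⟩
  -- pick v0 ≠ 0 and v1 ∉ span {v0}
  obtain ⟨v0, hv0⟩ := exists_ne (0 : V')
  have hspan : Submodule.span K {v0} ≠ ⊤ := by
    intro h
    have h1 : finrank K (Submodule.span K {v0}) = 1 := finrank_span_singleton hv0
    rw [h, finrank_top] at h1
    omega
  obtain ⟨v1, hv1⟩ : ∃ v1, v1 ∉ Submodule.span K {v0} := by
    by_contra h; push_neg at h
    exact hspan (Submodule.eq_top_iff'.mpr h)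
  have hsub : ∀ c : K, v1 - c • v0 ≠ 0 := by
    intro c hc
    apply hv1
    have : v1 = c • v0 := by
      have := sub_eq_zero.mp hc; exact this
    rw [this]
    exact Submodule.smul_mem _ _ (Submodule.mem_span_singleton_self v0)
  -- the isomorphism at v0 and the endomorphism T
  let e0 : W ≃ₗ[K] V := LinearEquiv.ofBijective (ev v0) (hev_bij v0 hv0)
  let T : Module.End K V := (ev v1).comp (e0.symm : V →ₗ[K] W)
  obtain ⟨c, hc⟩ := Module.End.exists_eigenvalue T
  obtain ⟨x, hx⟩ := hc.exists_hasEigenvector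
  set f : W := e0.symm x with hfdef
  have hx0 : (e0 : W →ₗ[K] V) f = x := e0.apply_symm_apply x
  have hTx : (f : V' →ₗ[K] V) v1 = c • x := by
    have := hx.apply_eq_smul
    simpa [T, hev] using this
  have hfv0 : (f : V' →ₗ[K] V) v0 = x := hx0
  have hzero : ev (v1 - c • v0) f = 0 := by
    rw [hev]
    rw [map_sub, map_smul, hTx, hfv0]
    simp
  have hf0 : f = 0 := by
    have := hev_inj _ (hsub c)
    apply this
    rw [hzero, map_zero]
  have : x = 0 := by
    rw [← hx0, hf0, map_zero]
  exact hx.right this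
end

section
/- The conclusion of the preceding determinantal lemma fails over non-algebraically-closed fields: if K ⊆ L' ⊆ L is a chain of finite field extensions with [L':K] = n' > 1 and [L:K] = n, then the space W = {φ_x : x ∈ L} ⊆ Hom_K(L', L), where φ_x(y) = xy, is an n-dimensional K-subspace all of whose nonzero elements have rank n'. -/
open Module

/-- The `K`-linear map `L →ₗ[K] Hom_K(L', L)` sending `x` to `φ_x : y ↦ x · y`. -/
noncomputable def mulPhi (K L' L : Type*) [Field K] [Field L'] [Field L]
    [Algebra K L'] [Algebra K L] [Algebra L' L] [IsScalarTower K L' L] :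
    L →ₗ[K] (L' →ₗ[K] L) where
  toFun x := (LinearMap.mulLeft K x).comp (IsScalarTower.toAlgHom K L' L).toLinearMap
  map_add' x y := by
    ext z
    simp [add_mul]
  map_smul' c x := by
    ext z
    simp [smul_mul_assoc]

/-- The determinantal lemma fails over non-algebraically-closed fields: for a chain of
finite field extensions `K ⊆ L' ⊆ L` with `[L':K] = n' > 1` and `[L:K] = n`, the space
`W = {φ_x : x ∈ L} ⊆ Hom_K(L', L)` is an `n`-dimensional `K`-subspace all of whose
nonzero elements have rank `n'`. -/
theorem counterexample_constant_rank_subspace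
    {K L' L : Type*} [Field K] [Field L'] [Field L]
    [Algebra K L'] [Algebra K L] [Algebra L' L] [IsScalarTower K L' L]
    [FiniteDimensional K L]
    (hn' : 1 < finrank K L') :
    Function.Injective (mulPhi K L' L) ∧
    finrank K (LinearMap.range (mulPhi K L' L)) = finrank K L ∧
    ∀ f ∈ LinearMap.range (mulPhi K L' L), f ≠ 0 →
      finrank K (LinearMap.range f) = finrank K L' := by
  have hinj : Function.Injective (mulPhi K L' L) := by
    intro x y h
    have := congrArg (fun g => g 1) h
    simpa [mulPhi] using this
  refine ⟨hinj, ?_, ?_⟩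
  · exact LinearMap.finrank_range_of_inj hinj
  · rintro f ⟨x, rfl⟩ hf
    have hx : x ≠ 0 := by
      rintro rfl
      apply hf
      exact hinj.eq_iff.mpr rfl ▸ (map_zero (mulPhi K L' L))
    have hfinj : Function.Injective (mulPhi K L' L x) := by
      intro a b h
      simp only [mulPhi, LinearMap.coe_mk, AddHom.coe_mk, LinearMap.comp_apply,
        LinearMap.mulLeft_apply] at h
      have := mul_left_cancel₀ hx h
      exact (algebraMap L' L).injective this
    exact LinearMap.finrank_range_of_inj hfinj
end

section
/- If the characteristic of K does not divide |G| and ρ : G → Aut(V) is an irreducible representation, then K[G] decomposes as a direct sum of unital algebras W ⊕ ker(ρ̃), where W is isomorphic as an algebra to the image of ρ̃ : K[G] → End(V). -/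
/-!
By Maschke's theorem `K[G]` is semisimple, so the two-sided ideal `ker ρ̃` is generated by an
idempotent both as a left ideal and (in `K[G]ᵐᵒᵖ`) as a right ideal. The two idempotents coincide,
giving an identity element `e` of `ker ρ̃`, which is then central. Hence
`K[G] = (1 - e) K[G] ⊕ e K[G]` with `e K[G] = ker ρ̃`, and `ρ̃` maps the unital algebra
`(1 - e) K[G]` isomorphically onto its image.
-/

section

variable {R A B F : Type*}

section Ring

variable [Ring A] [Ring B] [FunLike F A B] [RingHomClass F A B]

theorem IsSemisimpleRing.exists_mem_ker_forall_mul_eq_self [IsSemisimpleRing A] (f : F) :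
    ∃ e ∈ RingHom.ker f, ∀ x ∈ RingHom.ker f, x * e = x := by
  obtain ⟨e, he, hker⟩ := IsSemisimpleRing.ideal_eq_span_idempotent (RingHom.ker f)
  refine ⟨e, hker ▸ Ideal.mem_span_singleton_self e, fun x hx => ?_⟩
  rw [hker, Ideal.mem_span_singleton'] at hx
  obtain ⟨a, rfl⟩ := hx
  rw [mul_assoc, he.eq]

theorem IsSemisimpleRing.exists_mem_ker_forall_mul_eq_self_and_mul_eq_self [IsSemisimpleRing A]
    (f : F) : ∃ e, f e = 0 ∧ ∀ x, f x = 0 → e * x = x ∧ x * e = x := by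
  obtain ⟨e, he, hright⟩ := exists_mem_ker_forall_mul_eq_self f
  obtain ⟨e', he', hleft⟩ := exists_mem_ker_forall_mul_eq_self (RingHom.op (f : A →+* B))
  have hleft' : ∀ x ∈ RingHom.ker f, e'.unop * x = x := fun x hx =>
    congrArg MulOpposite.unop (hleft (MulOpposite.op x) (by simpa using hx))
  have he'e : e'.unop = e := by
    rw [← hleft' e he, hright _ (by simpa using he')]
  exact ⟨e, he, fun x hx => ⟨he'e ▸ hleft' x hx, hright x hx⟩⟩

theorem commute_of_forall_map_eq_zero_mul_eq_self (f : F) {e : A} (he : f e = 0)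
    (hid : ∀ x, f x = 0 → e * x = x ∧ x * e = x) (a : A) : Commute a e := by
  have hae : f (a * e) = 0 := by rw [map_mul, he, mul_zero]
  have hea : f (e * a) = 0 := by rw [map_mul, he, zero_mul]
  calc a * e = e * (a * e) := (hid _ hae).1.symm
    _ = e * a * e := (mul_assoc _ _ _).symm
    _ = e * a := (hid _ hea).2

end Ring

variable [CommRing R] [Ring A] [Ring B] [Algebra R A] [Algebra R B]

variable (R) in
def NonUnitalSubalgebra.rightAnnihilator (e : A) : NonUnitalSubalgebra R A where
  carrier := {x | e * x = 0}
  add_mem' {a b} (ha : e * a = 0) (hb : e * b = 0) := by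
    simp only [Set.mem_ofPred_eq, mul_add, ha, hb, add_zero]
  zero_mem' := mul_zero e
  mul_mem' {a b} (ha : e * a = 0) _ := by
    simp only [Set.mem_ofPred_eq, ← mul_assoc, ha, zero_mul]
  smul_mem' k a (ha : e * a = 0) := by
    simp only [Set.mem_ofPred_eq, mul_smul_comm, ha, smul_zero]

namespace NonUnitalSubalgebra

@[simp]
theorem mem_rightAnnihilator {e x : A} : x ∈ rightAnnihilator R e ↔ e * x = 0 := Iff.rfl

theorem one_sub_mem_rightAnnihilator {e : A} (he : IsIdempotentElem e) :
    1 - e ∈ rightAnnihilator R e := by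
  rw [mem_rightAnnihilator, mul_sub, mul_one, he.eq, sub_self]

theorem one_sub_mul_eq_self_and_mul_one_sub_eq_self {e w : A} (hcomm : Commute w e)
    (hw : w ∈ rightAnnihilator R e) : (1 - e) * w = w ∧ w * (1 - e) = w := by
  rw [mem_rightAnnihilator] at hw
  exact ⟨by rw [sub_mul, one_mul, hw, sub_zero], by rw [mul_sub, mul_one, hcomm.eq, hw, sub_zero]⟩

theorem isCompl_rightAnnihilator_ker (f : A →ₐ[R] B) {e : A} (he : f e = 0)
    (hid : ∀ x, f x = 0 → e * x = x) :
    IsCompl (rightAnnihilator R e).toSubmodule (LinearMap.ker f.toLinearMap) := by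
  constructor
  · rw [Submodule.disjoint_def]
    intro x (hxW : e * x = 0) (hxI : f x = 0)
    rw [← hid x hxI, hxW]
  · rw [Submodule.codisjoint_iff_exists_add_eq]
    refine fun x => ⟨x - e * x, e * x, ?_, ?_, sub_add_cancel x _⟩
    · change e * (x - e * x) = 0
      rw [mul_sub, ← mul_assoc, hid e he, sub_self]
    · change f (e * x) = 0
      rw [map_mul, he, zero_mul]

end NonUnitalSubalgebra

theorem AlgHom.exists_linearEquiv_range_of_isCompl (f : A →ₐ[R] B) {W : NonUnitalSubalgebra R A}
    (h : IsCompl W.toSubmodule (LinearMap.ker f.toLinearMap)) :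
    ∃ e : W ≃ₗ[R] f.range, ∀ x y : W, e (x * y) = e x * e y :=
  ⟨(f.toLinearMap.kerComplementEquivRange h).trans (LinearEquiv.ofEq _ _ rfl),
    fun x y => Subtype.ext (map_mul f (x : A) y)⟩

end

theorem group_algebra_splits_off_image_general
    {K G V : Type*} [Field K] [Group G] [Fintype G]
    [AddCommGroup V] [Module K V]
    (hchar : ¬ (ringChar K ∣ Fintype.card G))
    (ρ : Representation K G V) :
    ∃ W : NonUnitalSubalgebra K (MonoidAlgebra K G),
      IsCompl W.toSubmodule (LinearMap.ker ρ.asAlgebraHom.toLinearMap) ∧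
      (∃ u ∈ W, ∀ w ∈ W, u * w = w ∧ w * u = w) ∧
      (∃ u', ρ.asAlgebraHom u' = 0 ∧
        ∀ y, ρ.asAlgebraHom y = 0 → u' * y = y ∧ y * u' = y) ∧
      ∃ e : W ≃ₗ[K] ρ.asAlgebraHom.range,
        ∀ x y : W, e (x * y) = e x * e y := by
  have : NeZero (Nat.card G : K) :=
    ⟨by rwa [Nat.card_eq_fintype_card, Ne, CharP.cast_eq_zero_iff K (ringChar K)]⟩
  obtain ⟨e, he, hid⟩ :=
    IsSemisimpleRing.exists_mem_ker_forall_mul_eq_self_and_mul_eq_self ρ.asAlgebraHom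
  have hcompl := NonUnitalSubalgebra.isCompl_rightAnnihilator_ker ρ.asAlgebraHom he
    fun x hx => (hid x hx).1
  refine ⟨NonUnitalSubalgebra.rightAnnihilator K e, hcompl,
    ⟨1 - e, NonUnitalSubalgebra.one_sub_mem_rightAnnihilator (hid e he).1, fun w hw =>
      NonUnitalSubalgebra.one_sub_mul_eq_self_and_mul_one_sub_eq_self
        (commute_of_forall_map_eq_zero_mul_eq_self ρ.asAlgebraHom he hid w) hw⟩,
    ⟨e, he, hid⟩, ρ.asAlgebraHom.exists_linearEquiv_range_of_isCompl hcompl⟩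

/-- For an irreducible representation `ρ` of a finite group `G` over a field `K` whose
characteristic does not divide `|G|`, the group algebra `K[G]` decomposes as a direct sum
of unital algebras `W ⊕ ker ρ̃`, where `W` is isomorphic as an algebra to the image of
`ρ̃ : K[G] → End(V)`. -/
theorem group_algebra_splits_off_image
    {K G V : Type*} [Field K] [Group G] [Fintype G]
    [AddCommGroup V] [Module K V] [FiniteDimensional K V] [Nontrivial V]
    (hchar : ¬ (ringChar K ∣ Fintype.card G))
    (ρ : Representation K G V)
    (hirr : ∀ U : Submodule K V, (∀ (g : G), ∀ x ∈ U, ρ g x ∈ U) → U = ⊥ ∨ U = ⊤) :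
    ∃ W : NonUnitalSubalgebra K (MonoidAlgebra K G),
      IsCompl W.toSubmodule (LinearMap.ker ρ.asAlgebraHom.toLinearMap) ∧
      (∃ u ∈ W, ∀ w ∈ W, u * w = w ∧ w * u = w) ∧
      (∃ u', ρ.asAlgebraHom u' = 0 ∧
        ∀ y, ρ.asAlgebraHom y = 0 → u' * y = y ∧ y * u' = y) ∧
      ∃ e : W ≃ₗ[K] ρ.asAlgebraHom.range,
        ∀ x y : W, e (x * y) = e x * e y :=
  group_algebra_splits_off_image_general hchar ρ
end

section
/- Let I ⊆ K[x₁,…,xₙ] be a radical proper ideal with K[x₁,…,xₙ]/I finite-dimensional over K, and suppose all points of V(I) have coordinates in K. Then the number of points of V(I) equals dim_K K[x₁,…,xₙ]/I, and evaluation at the points of V(I) induces a K-algebra isomorphism K[x₁,…,xₙ]/I ≅ K^m. -/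
open MvPolynomial

/-!
Write `V` for the `K`-rational zeros of `I`. Since `K[x₁,…,xₙ]` is a Jacobson ring and `I` is
radical, `I` is the intersection of the maximal ideals containing it; each of these is the ideal
of a point of `V(I)` over `K̄`, and that point is `K`-rational by assumption. Hence `I` is exactly
the ideal of polynomials vanishing on `V`, i.e. the kernel of evaluation `K[x₁,…,xₙ] → K^V`.
Points of `V` give distinct `K`-algebra maps `K[x₁,…,xₙ]/I → K`, which are linearly
independent, so `V` is finite, and then Lagrange interpolation makes evaluation surjective.
-/

namespace MvPolynomial

variable {σ K : Type*} [Field K]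

noncomputable def evalOn (S : Set (σ → K)) : MvPolynomial σ K →ₐ[K] (S → K) :=
  AlgHom.pi fun x => aeval x.1

@[simp]
theorem evalOn_apply (S : Set (σ → K)) (p : MvPolynomial σ K) (x : S) :
    evalOn S p x = eval x.1 p :=
  rfl

theorem ker_evalOn (S : Set (σ → K)) : RingHom.ker (evalOn S) = vanishingIdeal K S := by
  ext p
  simp [_root_.funext_iff]

theorem exists_eval_eq_one_and_eval_eq_zero {x y : σ → K} (h : x ≠ y) :
    ∃ q : MvPolynomial σ K, eval x q = 1 ∧ eval y q = 0 := by
  obtain ⟨i, hi⟩ := Function.ne_iff.mp h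
  refine ⟨C (x i - y i)⁻¹ * (X i - C (y i)), ?_, ?_⟩ <;> simp [sub_ne_zero.mpr hi]

theorem exists_eval_eq_one_and_forall_eval_eq_zero [DecidableEq (σ → K)]
    (x : σ → K) (S : Finset (σ → K)) (hx : x ∉ S) :
    ∃ q : MvPolynomial σ K, eval x q = 1 ∧ ∀ y ∈ S, eval y q = 0 := by
  induction S using Finset.induction_on with
  | empty => exact ⟨1, by simp, by simp⟩
  | insert y S _ ih =>
    obtain ⟨q, hqx, hqS⟩ := ih fun h => hx (Finset.mem_insert_of_mem h)
    have hxy : x ≠ y := fun h => hx (h ▸ Finset.mem_insert_self x S)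
    obtain ⟨r, hrx, hry⟩ := exists_eval_eq_one_and_eval_eq_zero hxy
    refine ⟨q * r, by simp [hqx, hrx], ?_⟩
    simp +contextual [hry, hqS]

theorem evalOn_surjective (S : Set (σ → K)) [Finite S] : Function.Surjective (evalOn S) := by
  classical
  have := Fintype.ofFinite S
  intro g
  choose q hqx hqS using fun x : S =>
    exists_eval_eq_one_and_forall_eval_eq_zero x.1 (S.toFinset.erase x.1) (Finset.notMem_erase _ _)
  refine ⟨∑ x, C (g x) * q x, ?_⟩
  funext y
  rw [evalOn_apply, map_sum, Finset.sum_eq_single y]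
  · simp [hqx]
  · intro x _ hxy
    simp [hqS x y.1 (by simpa using Subtype.coe_ne_coe.mpr (Ne.symm hxy))]
  · simp

theorem finite_zeroLocus (L : Type*) [Field L] [Algebra K L] (I : Ideal (MvPolynomial σ K))
    [Module.Finite K (MvPolynomial σ K ⧸ I)] : (zeroLocus L I).Finite := by
  refine Set.finite_coe_iff.mp <| Finite.of_injective
    (fun x : zeroLocus L I => Ideal.Quotient.liftₐ I (aeval x.1) x.2) fun x y hxy => ?_
  ext i
  have hxy_i := congr($hxy (Ideal.Quotient.mk I (X i)))
  change aeval x.1 (X i) = aeval y.1 (X i) at hxy_i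
  simpa using hxy_i

theorem vanishingIdeal_zeroLocus_eq_self [Finite σ] (L : Type*) [Field L] [IsAlgClosed L]
    [Algebra K L] {I : Ideal (MvPolynomial σ K)} (hI : I.IsRadical)
    (hrat : ∀ x ∈ zeroLocus L I, ∀ i, x i ∈ Set.range (algebraMap K L)) :
    vanishingIdeal K (zeroLocus K I) = I := by
  refine le_antisymm ?_ (le_vanishingIdeal_zeroLocus I)
  conv_rhs => rw [← hI.radical, I.radical_eq_jacobson]
  refine le_sInf ?_
  rintro M ⟨hIM, hM⟩
  obtain ⟨x, rfl⟩ := eq_vanishingIdeal_singleton_of_isMaximal L hM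
  have hx : x ∈ zeroLocus L I := le_zeroLocus_iff_le_vanishingIdeal.mpr hIM rfl
  choose y hy using hrat x hx
  obtain rfl : x = algebraMap K L ∘ y := _root_.funext fun i => (hy i).symm
  have hyI : y ∈ zeroLocus K I := fun p hp => by
    simpa [aeval_algebraMap_eq_zero_iff] using hx p hp
  intro p hp
  rw [mem_vanishingIdeal_singleton_iff, aeval_algebraMap_eq_zero_iff]
  exact hp y hyI

end MvPolynomial

theorem radical_ideal_evaluation_iso_general
    {K : Type*} [Field K] {n : ℕ}
    (I : Ideal (MvPolynomial (Fin n) K)) (hrad : I.IsRadical)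
    (hfd : FiniteDimensional K (MvPolynomial (Fin n) K ⧸ I))
    (hK : ∀ a : Fin n → AlgebraicClosure K, (∀ f ∈ I, aeval a f = 0) →
      ∀ i, a i ∈ Set.range (algebraMap K (AlgebraicClosure K))) :
    Nat.card {a : Fin n → K // ∀ f ∈ I, eval a f = 0} =
      Module.finrank K (MvPolynomial (Fin n) K ⧸ I) ∧
    ∃ e : (MvPolynomial (Fin n) K ⧸ I) ≃ₐ[K]
        ({a : Fin n → K // ∀ f ∈ I, eval a f = 0} → K),
      ∀ f : MvPolynomial (Fin n) K,
        e (Ideal.Quotient.mk I f) = fun a => eval a.1 f := by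
  have : Fintype (zeroLocus K I) := (finite_zeroLocus K I).fintype
  have hker : RingHom.ker (evalOn (zeroLocus K I)) = I := by
    rw [ker_evalOn, vanishingIdeal_zeroLocus_eq_self _ hrad hK]
  let e := (Ideal.quotientEquivAlgOfEq K hker.symm).trans
    (Ideal.quotientKerAlgEquivOfSurjective (evalOn_surjective (zeroLocus K I)))
  refine ⟨?_, e, fun f => rfl⟩
  rw [e.toLinearEquiv.finrank_eq, Module.finrank_fintype_fun_eq_card, ← Nat.card_eq_fintype_card]
  rfl

/-- For a radical proper ideal `I` of `K[x₁,…,xₙ]` with finite-dimensional quotient all of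
whose zeros (over an algebraic closure) are `K`-rational, the number of points of `V(I)`
equals `dim_K K[x₁,…,xₙ]/I`, and evaluation at the points of `V(I)` induces a `K`-algebra
isomorphism `K[x₁,…,xₙ]/I ≅ K^m`. -/
theorem radical_ideal_evaluation_iso
    {K : Type*} [Field K] {n : ℕ}
    (I : Ideal (MvPolynomial (Fin n) K)) (hI : I ≠ ⊤) (hrad : I.IsRadical)
    (hfd : FiniteDimensional K (MvPolynomial (Fin n) K ⧸ I))
    (hK : ∀ a : Fin n → AlgebraicClosure K, (∀ f ∈ I, aeval a f = 0) →
      ∀ i, a i ∈ Set.range (algebraMap K (AlgebraicClosure K))) :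
    Nat.card {a : Fin n → K // ∀ f ∈ I, eval a f = 0} =
      Module.finrank K (MvPolynomial (Fin n) K ⧸ I) ∧
    ∃ e : (MvPolynomial (Fin n) K ⧸ I) ≃ₐ[K]
        ({a : Fin n → K // ∀ f ∈ I, eval a f = 0} → K),
      ∀ f : MvPolynomial (Fin n) K,
        e (Ideal.Quotient.mk I f) = fun a => eval a.1 f :=
  radical_ideal_evaluation_iso_general I hrad hfd hK
end

section
/- For d ≥ 2, define the map σ ↦ σ' from {σ ∈ S_d : σ(d) = d} to {σ ∈ S_d : σ(d) = d−1} by σ'(d) = d−1, σ'(σ⁻¹(d−1)) = d, and σ'(i) = σ(i) otherwise. This map is a bijection, and Fix(σ) > Fix(σ') for every σ with σ(d) = d; consequently Σ_{σ(d)=d} Fix(σ) > Σ_{σ(d)=d−1} Fix(σ), where Fix denotes the number of fixed points. -/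
/-!
Left multiplication by the transposition `t = (d-1 d)` is an involution of `S_d` exchanging
`{σ(d) = d}` and `{σ(d) = d-1}`. If `σ(d) = d`, every fixed point of `tσ` is a fixed point of `σ`
other than `d`: a fixed point `i` of `tσ` satisfies `σ(i) = t(i)`, which rules out `i = d` and
`i = d-1` (the latter would give `σ(d-1) = d = σ(d)`). Summing the strict inequality
`Fix(tσ) < Fix(σ)` over the nonempty set `{σ(d) = d}` gives the claim.
-/

open Finset Equiv

theorem Finset.sum_lt_sum_of_bijOn {ι κ M : Type*} [AddCommMonoid M] [PartialOrder M]
    [IsOrderedCancelAddMonoid M] {s : Finset ι} {t : Finset κ} {f : ι → M} {g : κ → M}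
    {e : ι → κ} (he : Set.BijOn e s t) (hs : s.Nonempty) (hlt : ∀ i ∈ s, g (e i) < f i) :
    ∑ j ∈ t, g j < ∑ i ∈ s, f i := by
  rw [← Finset.sum_nbij e he.mapsTo he.injOn he.surjOn fun _ _ => rfl]
  exact Finset.sum_lt_sum_of_nonempty hs hlt

namespace Equiv.Perm

variable {α : Type*} [DecidableEq α]

theorem bijOn_swap_mul_apply_eq (a b x : α) :
    Set.BijOn (fun σ : Perm α => swap a b * σ) {σ | σ x = b} {σ | σ x = a} :=
  (Equiv.mulLeft (swap a b)).bijOn fun σ => by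
    simp [swap_apply_eq_iff, swap_apply_left]

variable [Fintype α]

theorem card_fixed_swap_mul_lt {a b : α} (hab : a ≠ b) {σ : Perm α} (hσ : σ b = b) :
    #{i | (swap a b * σ) i = i} < #{i | σ i = i} := by
  have hsub : ({i | (swap a b * σ) i = i} : Finset α) ⊆ ({i | σ i = i} : Finset α).erase b := by
    intro i hi
    replace hi : σ i = swap a b i := by simpa [swap_apply_eq_iff] using hi
    by_cases hia : i = a
    · subst hia
      exact absurd (σ.injective (by rw [hi, swap_apply_left, hσ])) hab
    by_cases hib : i = b
    · subst hib
      rw [hσ, swap_apply_right] at hi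
      exact (hab hi.symm).elim
    simp [hib, hi, swap_apply_of_ne_of_ne hia hib]
  calc #{i | (swap a b * σ) i = i} ≤ (({i | σ i = i} : Finset α).erase b).card :=
        card_le_card hsub
    _ < #{i | σ i = i} := card_erase_lt_of_mem (by simp [hσ])

end Equiv.Perm

open Equiv.Perm in
/-- For `d ≥ 2`, the map `σ ↦ (swap (d-1) d) ∘ σ` is a bijection from
`{σ ∈ S_d : σ(d) = d}` to `{σ ∈ S_d : σ(d) = d−1}` which strictly decreases the number of
fixed points; consequently `Σ_{σ(d)=d} Fix(σ) > Σ_{σ(d)=d−1} Fix(σ)`. -/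
theorem fixed_points_sum_inequality (d : ℕ) (hd : 2 ≤ d) :
    let last : Fin d := ⟨d - 1, by omega⟩
    let penult : Fin d := ⟨d - 2, by omega⟩
    let t : Equiv.Perm (Fin d) := Equiv.swap penult last
    let fix : Equiv.Perm (Fin d) → ℕ := fun σ => (univ.filter fun i => σ i = i).card
    Set.BijOn (fun σ => t * σ)
        {σ : Equiv.Perm (Fin d) | σ last = last}
        {σ : Equiv.Perm (Fin d) | σ last = penult} ∧
    (∀ σ : Equiv.Perm (Fin d), σ last = last → fix (t * σ) < fix σ) ∧
    ∑ σ ∈ univ.filter (fun σ : Equiv.Perm (Fin d) => σ last = last), fix σ >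
      ∑ σ ∈ univ.filter (fun σ : Equiv.Perm (Fin d) => σ last = penult), fix σ := by
  intro last penult t fix
  have hne : penult ≠ last := by simp only [penult, last, Fin.ne_iff_vne]; omega
  have hbij := bijOn_swap_mul_apply_eq penult last last
  have hfix : ∀ σ : Perm (Fin d), σ last = last → fix (t * σ) < fix σ :=
    fun σ hσ => card_fixed_swap_mul_lt hne hσ
  refine ⟨hbij, hfix, ?_⟩
  refine Finset.sum_lt_sum_of_bijOn (by simpa only [coe_filter_univ] using hbij) ⟨1, by simp⟩ ?_
  intro σ hσ
  exact hfix σ (by simpa using hσ)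
end
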